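/- Let G be a compact second countable topological group and let K be a compact (in the weak-* topology) set of Borel probability measures on G such that every μ ∈ K is coset aperiodic. Then for every sequence μ₁, μ₂, … of measures in K and every Borel probability measure ν on G, the convolutions μₙ * μₙ₋₁ * … * μ₁ * ν converge to the Haar probability measure 𝔪 in the weak-* topology as n → ∞. -/

import Mathlib

set_option linter.unusedSectionVars false
set_option maxHeartbeats 1000000
set_option synthInstance.maxHeartbeats 400000


open MeasureTheory Topology Filter Set Pointwise
open scoped BoundedContinuousFunction

variable {G : Type*} [Group G] [TopologicalSpace G] [IsTopologicalGroup G]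
  [CompactSpace G] [SecondCountableTopology G] [MeasurableSpace G] [BorelSpace G]

/-- The (closed) support of a measure: the set of points all of whose open
neighborhoods have positive measure. -/
def msupp {α : Type*} [TopologicalSpace α] [MeasurableSpace α] (μ : Measure α) : Set α :=
  {x | ∀ U : Set α, IsOpen U → x ∈ U → 0 < μ U}

/-- `μ` is *coset aperiodic*: `supp μ` is not contained in any coset of any proper closed
subgroup of `G`. -/
def CosetAperiodic (μ : Measure G) : Prop :=
  ¬ ∃ (H : Subgroup G) (g : G), IsClosed (H : Set G) ∧ H ≠ ⊤ ∧ msupp μ ⊆ g • (H : Set G)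

/-- `convSeqG μ ν n = μₙ * μₙ₋₁ * ⋯ * μ₁ * ν` (with `μ (k-1)` playing the role of `μₖ`),
where `*` is the convolution of measures on the group `G`. -/
noncomputable def convSeqG (μ : ℕ → Measure G) (ν : Measure G) : ℕ → Measure G
  | 0 => ν
  | n + 1 => (μ n).mconv (convSeqG μ ν n)

namespace IKaux

/-- The right-translate family: `Trans h x = (u ↦ h (u * x))` as a bounded continuous
function. -/
noncomputable def Trans (h : G →ᵇ ℝ) (x : G) : G →ᵇ ℝ :=
  h.compContinuous ⟨fun u => u * x, by continuity⟩

@[simp] lemma Trans_apply (h : G →ᵇ ℝ) (x u : G) : Trans h x u = h (u * x) := rfl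

lemma continuous_Trans (h : G →ᵇ ℝ) : Continuous (Trans h) := by
  have hcur : Continuous fun x : G => ContinuousMap.curry ⟨fun p : G × G => h (p.2 * p.1),
      by continuity⟩ x := (ContinuousMap.curry _).continuous
  have : Continuous fun x : G =>
      (ContinuousMap.isometryEquivBoundedOfCompact G ℝ)
        (ContinuousMap.curry ⟨fun p : G × G => h (p.2 * p.1), by continuity⟩ x) :=
    (ContinuousMap.isometryEquivBoundedOfCompact G ℝ).continuous.comp hcur
  refine this.congr fun x => ?_
  ext u
  rfl

/-- integral against a probability measure is `1`-Lipschitz on bounded continuous functions. -/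
lemma lipschitz_integral (β : Measure G) [IsProbabilityMeasure β] :
    LipschitzWith 1 (fun h : G →ᵇ ℝ => ∫ x, h x ∂β) := by
  refine LipschitzWith.of_dist_le_mul fun h g => ?_
  rw [NNReal.coe_one, one_mul, Real.dist_eq, ← integral_sub (h.integrable β) (g.integrable β)]
  calc |∫ x, (h x - g x) ∂β| ≤ ‖h - g‖ := by
        simpa using (h - g).norm_integral_le_norm β
    _ = dist h g := (dist_eq_norm h g).symm

lemma dist_integral_le (β : Measure G) [IsProbabilityMeasure β] (h g : G →ᵇ ℝ) :
    dist (∫ x, h x ∂β) (∫ x, g x ∂β) ≤ dist h g := by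
  simpa using (lipschitz_integral β).dist_le_mul h g

/-- The averaging operator `Aop β h (x) = ∫ h (u * x) dβ(u)`. -/
noncomputable def Aop (β : Measure G) [IsProbabilityMeasure β] (h : G →ᵇ ℝ) : G →ᵇ ℝ :=
  BoundedContinuousFunction.ofNormedAddCommGroup (fun x => ∫ u, h (u * x) ∂β)
    (by
      have : Continuous fun x => ∫ u, (Trans h x) u ∂β :=
        ((lipschitz_integral β).continuous).comp (continuous_Trans h)
      simpa using this)
    ‖h‖
    (by
      intro x
      have : ‖∫ u, (Trans h x) u ∂β‖ ≤ ‖Trans h x‖ := (Trans h x).norm_integral_le_norm β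
      simpa using this.trans (h.norm_compContinuous_le _))

@[simp] lemma Aop_apply (β : Measure G) [IsProbabilityMeasure β] (h : G →ᵇ ℝ) (x : G) :
    Aop β h x = ∫ u, h (u * x) ∂β := rfl



/-- the function `(u, x) ↦ h (u * x)` as a BCF on `G × G`. -/
noncomputable def mulBCF (h : G →ᵇ ℝ) : (G × G) →ᵇ ℝ :=
  h.compContinuous ⟨fun p => p.1 * p.2, by continuity⟩

lemma integrable_mul (h : G →ᵇ ℝ) (μ ν : Measure G) [IsProbabilityMeasure μ]
    [IsProbabilityMeasure ν] :
    Integrable (Function.uncurry fun u x => h (u * x)) (μ.prod ν) :=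
  (mulBCF h).integrable _

lemma integral_mconv (μ ν : Measure G) [IsProbabilityMeasure μ] [IsProbabilityMeasure ν]
    (h : G →ᵇ ℝ) :
    ∫ x, h x ∂(μ.mconv ν) = ∫ x, (Aop μ h) x ∂ν := by
  rw [Measure.mconv, integral_map (by fun_prop) (h.continuous.aestronglyMeasurable)]
  have h1 : ∫ p : G × G, h (p.1 * p.2) ∂(μ.prod ν)
      = ∫ u, ∫ x, h (u * x) ∂ν ∂μ := integral_prod _ (integrable_mul h μ ν)
  have h2 : ∫ u, ∫ x, h (u * x) ∂ν ∂μ = ∫ x, ∫ u, h (u * x) ∂μ ∂ν :=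
    integral_integral_swap (integrable_mul h μ ν)
  simp only [Aop_apply]
  rw [h1, h2]

lemma Aop_comp (μ lam : Measure G) [IsProbabilityMeasure μ] [IsProbabilityMeasure lam]
    (h : G →ᵇ ℝ) :
    Aop (μ.mconv lam) h = Aop lam (Aop μ h) := by
  ext x
  have := integral_mconv μ lam (Trans h x)
  simp only [Aop_apply, Trans_apply] at this ⊢
  rw [this]
  congr 1 with y
  congr 1 with u
  rw [mul_assoc]


/-- the function `(x, u) ↦ h (u * x)` as a BCF on `G × G` (swapped order). -/
noncomputable def mulBCF' (h : G →ᵇ ℝ) : (G × G) →ᵇ ℝ :=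
  h.compContinuous ⟨fun p => p.2 * p.1, by continuity⟩

lemma integrable_mul' (h : G →ᵇ ℝ) (μ ν : Measure G) [IsProbabilityMeasure μ]
    [IsProbabilityMeasure ν] :
    Integrable (Function.uncurry fun x u => h (u * x)) (μ.prod ν) :=
  (mulBCF' h).integrable _

/-- Mean preservation: averaging against `β` preserves the `m`-integral, for `m`
left invariant. -/
lemma integral_Aop (m : Measure G) [Measure.IsMulLeftInvariant m] [IsProbabilityMeasure m]
    (β : Measure G) [IsProbabilityMeasure β] (h : G →ᵇ ℝ) :
    ∫ x, (Aop β h) x ∂m = ∫ x, h x ∂m := by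
  simp only [Aop_apply]
  rw [integral_integral_swap (integrable_mul' h m β)]
  have : ∀ u : G, ∫ x, h (u * x) ∂m = ∫ x, h x ∂m := fun u =>
    integral_mul_left_eq_self (fun x => h x) u
  simp only [this, integral_const, probReal_univ, one_smul]

/-- Jensen: for a probability measure, `(∫ φ)² ≤ ∫ φ²`. -/
lemma sq_integral_le (β : Measure G) [IsProbabilityMeasure β] (φ : G →ᵇ ℝ) :
    (∫ u, φ u ∂β) * (∫ u, φ u ∂β) ≤ ∫ u, φ u * φ u ∂β := by
  set a : ℝ := ∫ u, φ u ∂β with ha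
  have h0 : 0 ≤ ∫ u, (φ u - a) * (φ u - a) ∂β :=
    integral_nonneg fun u => mul_self_nonneg _
  have hsq : Integrable (fun u => φ u * φ u) β := by
    exact (φ * φ).integrable β
  have hφ : Integrable (fun u => φ u) β := φ.integrable β
  have hexp : ∫ u, (φ u - a) * (φ u - a) ∂β
      = (∫ u, φ u * φ u ∂β) - 2 * a * a + a * a := by
    have : (fun u => (φ u - a) * (φ u - a))
        = fun u => φ u * φ u - 2 * a * φ u + a * a := by
      funext u; ring
    rw [this]
    rw [integral_add (by exact (hsq.sub ((hφ.const_mul (2 * a)))) ) (integrable_const _)]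
    rw [integral_sub hsq (hφ.const_mul (2 * a))]
    rw [MeasureTheory.integral_const_mul, integral_const, probReal_univ,
      one_smul, ← ha]
  nlinarith [h0, hexp]

/-- The quadratic deviation functional. -/
noncomputable def Qc (m : Measure G) (c : ℝ) (h : G →ᵇ ℝ) : ℝ :=
  ∫ x, (h x - c) * (h x - c) ∂m

lemma Qc_nonneg (m : Measure G) (c : ℝ) (h : G →ᵇ ℝ) : 0 ≤ Qc m c h :=
  integral_nonneg fun x => mul_self_nonneg _

/-- the BCF `(h - c)²`. -/
noncomputable def devsq (c : ℝ) (h : G →ᵇ ℝ) : G →ᵇ ℝ :=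
  (h - BoundedContinuousFunction.const G c) * (h - BoundedContinuousFunction.const G c)

@[simp] lemma devsq_apply (c : ℝ) (h : G →ᵇ ℝ) (x : G) :
    devsq c h x = (h x - c) * (h x - c) := rfl

lemma Qc_eq (m : Measure G) (c : ℝ) (h : G →ᵇ ℝ) : Qc m c h = ∫ x, (devsq c h) x ∂m := rfl

/-- Pointwise Jensen for the averaged function. -/
lemma Aop_dev_sq_le (β : Measure G) [IsProbabilityMeasure β] (c : ℝ) (h : G →ᵇ ℝ) (x : G) :
    devsq c (Aop β h) x ≤ (Aop β (devsq c h)) x := by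
  have key := sq_integral_le β (Trans h x - BoundedContinuousFunction.const G c)
  have h1 : ∫ u, (Trans h x - BoundedContinuousFunction.const G c) u ∂β
      = (Aop β h) x - c := by
    have h2 : ∫ u, ((Trans h x) u - c) ∂β = (∫ u, (Trans h x) u ∂β) - ∫ _u, (c : ℝ) ∂β :=
      integral_sub ((Trans h x).integrable β) (integrable_const _)
    simpa [integral_const] using h2
  simp only [h1] at key
  simpa using key

/-- Contraction of the quadratic deviation. -/
lemma Qc_Aop_le (m : Measure G) [Measure.IsMulLeftInvariant m] [IsProbabilityMeasure m]
    (β : Measure G) [IsProbabilityMeasure β] (c : ℝ) (h : G →ᵇ ℝ) :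
    Qc m c (Aop β h) ≤ Qc m c h := by
  have step1 : Qc m c (Aop β h) ≤ ∫ x, (Aop β (devsq c h)) x ∂m := by
    rw [Qc_eq]
    exact integral_mono ((devsq c (Aop β h)).integrable m) ((Aop β (devsq c h)).integrable m)
      (Aop_dev_sq_le β c h)
  calc Qc m c (Aop β h) ≤ ∫ x, (Aop β (devsq c h)) x ∂m := step1
    _ = ∫ x, (devsq c h) x ∂m := integral_Aop m β (devsq c h)
    _ = Qc m c h := (Qc_eq m c h).symm



/-- variance identity -/
lemma variance_eq (β : Measure G) [IsProbabilityMeasure β] (φ : G →ᵇ ℝ) :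
    ∫ u, (φ u - ∫ v, φ v ∂β) * (φ u - ∫ v, φ v ∂β) ∂β
      = (∫ u, φ u * φ u ∂β) - (∫ u, φ u ∂β) * (∫ u, φ u ∂β) := by
  set a : ℝ := ∫ v, φ v ∂β with ha
  have hsq : Integrable (fun u => φ u * φ u) β := by
    exact (φ * φ).integrable β
  have hφ : Integrable (fun u => φ u) β := φ.integrable β
  have h1 : (fun u => (φ u - a) * (φ u - a))
      = fun u => φ u * φ u - 2 * a * φ u + a * a := by
    funext u; ring
  have hi1 : Integrable (fun u => φ u * φ u - 2 * a * φ u) β :=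
    hsq.sub (hφ.const_mul (2 * a))
  have hi2 : Integrable (fun u => 2 * a * φ u) β := hφ.const_mul (2 * a)
  rw [h1, integral_add hi1 (integrable_const _), integral_sub hsq hi2,
    MeasureTheory.integral_const_mul, integral_const, probReal_univ,
    one_smul, ← ha]
  ring

/-- A nonnegative function with zero integral and a point of positivity in an
open set of positive measure gives a contradiction. -/
lemma integral_pos_of_pos_on (μ : Measure G) [IsFiniteMeasure μ] (ψ : G →ᵇ ℝ)
    (hψ : ∀ u, 0 ≤ ψ u) {u₀ : G} (hpos : ∀ U : Set G, IsOpen U → u₀ ∈ U → 0 < μ U)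
    (ht : 0 < ψ u₀) : 0 < ∫ u, ψ u ∂μ := by
  set U : Set G := (⇑ψ) ⁻¹' Set.Ioi (ψ u₀ / 2) with hU
  have hUopen : IsOpen U := (isOpen_Ioi).preimage ψ.continuous
  have hu₀U : u₀ ∈ U := by
    simp only [hU, Set.mem_preimage, Set.mem_Ioi]
    linarith
  have hμU : 0 < μ U := hpos U hUopen hu₀U
  have h1 : ψ u₀ / 2 * (μ U).toReal ≤ ∫ u in U, ψ u ∂μ := by
    have := setIntegral_ge_of_const_le hUopen.measurableSet (measure_ne_top μ U)
      (fun x hx => le_of_lt hx) ((ψ.integrable μ).integrableOn)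
    rw [smul_eq_mul, measureReal_def] at this; linarith
  have h2 : ∫ u in U, ψ u ∂μ ≤ ∫ u, ψ u ∂μ :=
    setIntegral_le_integral (ψ.integrable μ) (Filter.Eventually.of_forall hψ)
  have h3 : 0 < (μ U).toReal := ENNReal.toReal_pos hμU.ne' (measure_ne_top μ U)
  have : 0 < ψ u₀ / 2 * (μ U).toReal := by positivity
  linarith

lemma zero_on_msupp (β : Measure G) [IsProbabilityMeasure β] (ψ : G →ᵇ ℝ)
    (hψ : ∀ u, 0 ≤ ψ u) (hint : ∫ u, ψ u ∂β = 0) : ∀ u ∈ msupp β, ψ u = 0 := by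
  intro u hu
  by_contra hne
  have : 0 < ψ u := lt_of_le_of_ne (hψ u) (Ne.symm hne)
  have := integral_pos_of_pos_on β ψ hψ (fun U hU huU => hu U hU huU) this
  linarith [hint]

lemma zero_everywhere (m : Measure G) [IsProbabilityMeasure m] [m.IsOpenPosMeasure]
    (ψ : G →ᵇ ℝ) (hψ : ∀ u, 0 ≤ ψ u) (hint : ∫ u, ψ u ∂m = 0) : ∀ u, ψ u = 0 := by
  intro u
  by_contra hne
  have hlt : 0 < ψ u := lt_of_le_of_ne (hψ u) (Ne.symm hne)
  have := integral_pos_of_pos_on m ψ hψ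
    (fun U hU huU => hU.measure_pos m ⟨u, huU⟩) hlt
  linarith [hint]

lemma msupp_nonempty (β : Measure G) [IsProbabilityMeasure β] : (msupp β).Nonempty := by
  by_contra hemp
  rw [Set.not_nonempty_iff_eq_empty] at hemp
  have hforall : ∀ x : G, ∃ U : Set G, IsOpen U ∧ x ∈ U ∧ β U = 0 := by
    intro x
    have : x ∉ msupp β := by rw [hemp]; exact Set.notMem_empty x
    simp only [msupp, Set.mem_setOf_eq, not_forall] at this
    obtain ⟨U, hUo, hxU, hU0⟩ := this
    exact ⟨U, hUo, hxU, by simpa using hU0⟩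
  choose U hUo hxU hU0 using hforall
  obtain ⟨t, ht⟩ := isCompact_univ.elim_finite_subcover U hUo
    (fun x _ => Set.mem_iUnion.2 ⟨x, hxU x⟩)
  have : β (Set.univ : Set G) = 0 := by
    refine le_antisymm ?_ zero_le
    calc β Set.univ ≤ β (⋃ x ∈ t, U x) := measure_mono ht
      _ ≤ ∑ x ∈ t, β (U x) := measure_biUnion_finset_le t U
      _ = 0 := by simp [hU0]
  simp [measure_univ] at this

/-- **Strictness**: if averaging by a coset aperiodic probability measure preserves the
quadratic deviation of a mean-`c` function, then that deviation is zero. -/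
lemma Qc_strict (m : Measure G) [Measure.IsMulLeftInvariant m] [m.IsOpenPosMeasure]
    [IsProbabilityMeasure m] (β : Measure G) [IsProbabilityMeasure β]
    (hca : CosetAperiodic β) (h : G →ᵇ ℝ) (c : ℝ) (hmean : ∫ x, h x ∂m = c)
    (heq : Qc m c (Aop β h) = Qc m c h) : Qc m c h = 0 := by
  -- the deficiency function
  set V : G →ᵇ ℝ := Aop β (devsq c h) - devsq c (Aop β h) with hV
  have hVnonneg : ∀ x, 0 ≤ V x := by
    intro x
    simp only [hV, BoundedContinuousFunction.coe_sub, Pi.sub_apply, sub_nonneg]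
    exact Aop_dev_sq_le β c h x
  have hVint : ∫ x, V x ∂m = 0 := by
    simp only [hV, BoundedContinuousFunction.coe_sub, Pi.sub_apply]
    rw [integral_sub ((Aop β (devsq c h)).integrable m) ((devsq c (Aop β h)).integrable m)]
    rw [integral_Aop m β (devsq c h)]
    have e1 : ∫ x, (devsq c h) x ∂m = Qc m c h := (Qc_eq m c h).symm
    have e2 : ∫ x, (devsq c (Aop β h)) x ∂m = Qc m c (Aop β h) := (Qc_eq m c (Aop β h)).symm
    rw [e1, e2, heq, sub_self]
  have hVzero : ∀ x, V x = 0 := zero_everywhere m V hVnonneg hVint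
  -- pointwise rigidity on the support
  have key : ∀ x : G, ∀ u ∈ msupp β, h (u * x) = (Aop β h) x := by
    intro x
    set φ : G →ᵇ ℝ := Trans h x - BoundedContinuousFunction.const G c with hφ
    have hφu : ∀ u, φ u = h (u * x) - c := fun u => rfl
    have hφint : ∫ u, φ u ∂β = (Aop β h) x - c := by
      have h2 : ∫ u, ((Trans h x) u - c) ∂β = (∫ u, (Trans h x) u ∂β) - ∫ _u, (c : ℝ) ∂β :=
        integral_sub ((Trans h x).integrable β) (integrable_const _)
      simp only [hφ]
      simpa [integral_const] using h2
    set a : ℝ := (Aop β h) x - c with haa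
    set ψ : G →ᵇ ℝ := (φ - BoundedContinuousFunction.const G a) *
        (φ - BoundedContinuousFunction.const G a) with hψdef
    have hψnonneg : ∀ u, 0 ≤ ψ u := fun u => mul_self_nonneg _
    have hψint : ∫ u, ψ u ∂β = 0 := by
      have hvar := variance_eq β φ
      rw [hφint] at hvar
      have hψeq : ∀ u, ψ u = (φ u - a) * (φ u - a) := fun u => rfl
      have e3 : ∫ u, ψ u ∂β = ∫ u, (φ u - a) * (φ u - a) ∂β := by
        simp only [hψeq]
      rw [e3, hvar]
      -- now need:  ∫ φ² − a² = V x = 0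
      have hVx : V x = (∫ u, φ u * φ u ∂β) - a * a := by
        simp only [hV, BoundedContinuousFunction.coe_sub, Pi.sub_apply]
        have l1 : (Aop β (devsq c h)) x = ∫ u, φ u * φ u ∂β := by
          simp only [Aop_apply, devsq_apply, hφu]
        have l2 : (devsq c (Aop β h)) x = a * a := by
          simp only [devsq_apply, haa]
        rw [l1, l2]
      have := hVzero x
      rw [hVx] at this
      linarith
    intro u hu
    have := zero_on_msupp β ψ hψnonneg hψint u hu
    have hzz : (φ u - a) * (φ u - a) = 0 := this
    have : φ u = a := by nlinarith [hzz]
    rw [hφu] at this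
    rw [haa] at this
    linarith
  -- extract a support point
  obtain ⟨u₀, hu₀⟩ := msupp_nonempty β
  -- the stabilizer-type subgroup
  set H : Subgroup G :=
    { carrier := {t : G | ∀ y : G, h (u₀ * (t * y)) = h (u₀ * y)}
      one_mem' := by intro y; simp
      mul_mem' := by
        intro t₁ t₂ h₁ h₂ y
        have e1 : u₀ * (t₁ * t₂ * y) = u₀ * (t₁ * (t₂ * y)) := by group
        rw [e1, h₁ (t₂ * y), h₂ y]
      inv_mem' := by
        intro t ht y
        have := ht (t⁻¹ * y)
        simpa [mul_assoc] using this.symm } with hH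
  have hHmem : ∀ t : G, t ∈ H ↔ ∀ y : G, h (u₀ * (t * y)) = h (u₀ * y) := fun t => Iff.rfl
  have hHclosed : IsClosed (H : Set G) := by
    have : (H : Set G) = ⋂ y : G, {t : G | h (u₀ * (t * y)) = h (u₀ * y)} := by
      ext t
      simp [hHmem, Set.mem_iInter]
    rw [this]
    exact isClosed_iInter fun y =>
      isClosed_eq (h.continuous.comp (by continuity)) continuous_const
  have hsub : msupp β ⊆ u₀ • (H : Set G) := by
    intro u hu
    rw [Set.mem_smul_set_iff_inv_smul_mem]
    simp only [smul_eq_mul, SetLike.mem_coe, hHmem]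
    intro y
    have e1 : u₀ * (u₀⁻¹ * u * y) = u * y := by group
    rw [e1, key y u hu, ← key y u₀ hu₀]
  have hHtop : H = ⊤ := by
    by_contra hne
    exact hca ⟨H, u₀, hHclosed, hne, hsub⟩
  -- h is constant
  have hconst : ∀ z : G, h z = h u₀ := by
    intro z
    have ht : (u₀⁻¹ * z) ∈ H := by rw [hHtop]; trivial
    have := (hHmem _).1 ht 1
    simpa [mul_assoc] using this
  have hc : h u₀ = c := by
    rw [← hmean]
    have : (fun x : G => h x) = fun _ => h u₀ := funext hconst
    rw [this, integral_const, probReal_univ, one_smul]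
  have : (fun x => (h x - c) * (h x - c)) = fun _ : G => (0 : ℝ) := by
    funext x
    rw [hconst x, hc]
    ring
  rw [Qc, this, integral_zero]



lemma cont_eval (φ : G →ᵇ ℝ) :
    Continuous fun β : ProbabilityMeasure G => ∫ x, φ x ∂(β : Measure G) :=
  continuous_iff_continuousAt.2 fun _ =>
    MeasureTheory.ProbabilityMeasure.tendsto_iff_forall_integral_tendsto.mp tendsto_id φ

lemma cont_Aop_meas (h : G →ᵇ ℝ) :
    Continuous fun β : ProbabilityMeasure G => Aop (β : Measure G) h := by
  refine continuous_iff_continuousAt.2 fun β₀ => ?_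
  rw [ContinuousAt, Metric.tendsto_nhds]
  intro ε hε
  have hε4 : 0 < ε / 4 := by linarith
  set U : G → Set G := fun s => {x | dist (Trans h x) (Trans h s) < ε / 4} with hUdef
  have hUo : ∀ s : G, IsOpen (U s) := fun s =>
    isOpen_lt ((continuous_Trans h).dist continuous_const) continuous_const
  have hcov : (Set.univ : Set G) ⊆ ⋃ s, U s := fun x _ =>
    Set.mem_iUnion.2 ⟨x, by simp only [hUdef, Set.mem_setOf_eq, dist_self]; positivity⟩
  obtain ⟨t, ht⟩ := isCompact_univ.elim_finite_subcover U hUo hcov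
  have hev : ∀ᶠ β : ProbabilityMeasure G in 𝓝 β₀, ∀ s ∈ t,
      dist (∫ u, (Trans h s) u ∂(β : Measure G)) (∫ u, (Trans h s) u ∂(β₀ : Measure G))
        < ε / 4 := by
    rw [Filter.eventually_all_finset]
    intro s _
    have hcs := (cont_eval (Trans h s)).continuousAt (x := β₀)
    exact Metric.tendsto_nhds.1 hcs (ε / 4) hε4
  filter_upwards [hev] with β hβ
  have hle : dist (Aop (β : Measure G) h) (Aop (β₀ : Measure G) h) ≤ 3 * (ε / 4) := by
    refine (BoundedContinuousFunction.dist_le (by positivity)).2 fun x => ?_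
    obtain ⟨s, hst, hxs⟩ : ∃ s ∈ t, x ∈ U s := by
      have := ht (Set.mem_univ x)
      simpa using this
    have h1 : dist (Aop (β : Measure G) h x) (∫ u, (Trans h s) u ∂(β : Measure G))
        ≤ ε / 4 := by
      have := dist_integral_le (β : Measure G) (Trans h x) (Trans h s)
      simp only [Aop_apply]
      exact le_trans (by simpa using this) (le_of_lt hxs)
    have h2 : dist (∫ u, (Trans h s) u ∂(β : Measure G))
        (∫ u, (Trans h s) u ∂(β₀ : Measure G)) ≤ ε / 4 := le_of_lt (hβ s hst)
    have h3 : dist (∫ u, (Trans h s) u ∂(β₀ : Measure G)) (Aop (β₀ : Measure G) h x)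
        ≤ ε / 4 := by
      have := dist_integral_le (β₀ : Measure G) (Trans h s) (Trans h x)
      simp only [Aop_apply]
      refine le_trans (by simpa using this) ?_
      rw [dist_comm]
      exact le_of_lt hxs
    calc dist (Aop (β : Measure G) h x) (Aop (β₀ : Measure G) h x)
        ≤ dist (Aop (β : Measure G) h x) (∫ u, (Trans h s) u ∂(β : Measure G))
          + dist (∫ u, (Trans h s) u ∂(β : Measure G)) (∫ u, (Trans h s) u ∂(β₀ : Measure G))
          + dist (∫ u, (Trans h s) u ∂(β₀ : Measure G)) (Aop (β₀ : Measure G) h x) :=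
        dist_triangle4 _ _ _ _
      _ ≤ 3 * (ε / 4) := by linarith
  linarith [hle]

lemma Aop_lipschitz_fun (β : Measure G) [IsProbabilityMeasure β] (h g : G →ᵇ ℝ) :
    dist (Aop β h) (Aop β g) ≤ dist h g := by
  refine (BoundedContinuousFunction.dist_le dist_nonneg).2 fun x => ?_
  have h1 : dist (Trans h x) (Trans g x) ≤ dist h g := by
    have := (BoundedContinuousFunction.lipschitz_compContinuous
      (⟨fun u => u * x, by continuity⟩ : C(G, G))).dist_le_mul h g
    simpa [Trans] using this
  have := dist_integral_le β (Trans h x) (Trans g x)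
  simp only [Aop_apply]
  exact le_trans (by simpa using this) h1

lemma cont_Aop_joint :
    Continuous fun p : ProbabilityMeasure G × (G →ᵇ ℝ) => Aop (p.1 : Measure G) p.2 := by
  refine continuous_iff_continuousAt.2 fun p₀ => ?_
  rw [ContinuousAt, tendsto_iff_dist_tendsto_zero]
  have bound : ∀ p : ProbabilityMeasure G × (G →ᵇ ℝ),
      dist (Aop (p.1 : Measure G) p.2) (Aop (p₀.1 : Measure G) p₀.2)
        ≤ dist p.2 p₀.2 + dist (Aop (p.1 : Measure G) p₀.2) (Aop (p₀.1 : Measure G) p₀.2) := by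
    intro p
    calc dist (Aop (p.1 : Measure G) p.2) (Aop (p₀.1 : Measure G) p₀.2)
        ≤ dist (Aop (p.1 : Measure G) p.2) (Aop (p.1 : Measure G) p₀.2)
          + dist (Aop (p.1 : Measure G) p₀.2) (Aop (p₀.1 : Measure G) p₀.2) :=
        dist_triangle _ _ _
      _ ≤ dist p.2 p₀.2 + dist (Aop (p.1 : Measure G) p₀.2) (Aop (p₀.1 : Measure G) p₀.2) :=
        add_le_add (Aop_lipschitz_fun _ _ _) le_rfl
  have htend : Tendsto (fun p : ProbabilityMeasure G × (G →ᵇ ℝ) =>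
      dist p.2 p₀.2 + dist (Aop (p.1 : Measure G) p₀.2) (Aop (p₀.1 : Measure G) p₀.2))
      (𝓝 p₀) (𝓝 0) := by
    have t1 : Tendsto (fun p : ProbabilityMeasure G × (G →ᵇ ℝ) => dist p.2 p₀.2)
        (𝓝 p₀) (𝓝 (dist p₀.2 p₀.2)) :=
      (continuous_snd.dist continuous_const).tendsto p₀
    have t2 : Tendsto (fun p : ProbabilityMeasure G × (G →ᵇ ℝ) =>
        dist (Aop (p.1 : Measure G) p₀.2) (Aop (p₀.1 : Measure G) p₀.2)) (𝓝 p₀)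
        (𝓝 (dist (Aop (p₀.1 : Measure G) p₀.2) (Aop (p₀.1 : Measure G) p₀.2))) :=
      ((((cont_Aop_meas p₀.2).comp continuous_fst).dist continuous_const)).tendsto p₀
    have := t1.add t2
    simpa using this
  exact tendsto_of_tendsto_of_tendsto_of_le_of_le tendsto_const_nhds htend
    (fun p => dist_nonneg) bound

lemma cont_Qc (m : Measure G) [IsProbabilityMeasure m] (c : ℝ) :
    Continuous fun h : G →ᵇ ℝ => Qc m c h := by
  have h1 : Continuous fun h : G →ᵇ ℝ => devsq c h := by
    unfold devsq
    exact (continuous_id.sub continuous_const).mul (continuous_id.sub continuous_const)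
  have h2 : Continuous fun h : G →ᵇ ℝ => ∫ x, (devsq c h) x ∂m :=
    (lipschitz_integral m).continuous.comp h1
  simpa [Qc_eq] using h2

/-- The compact class of functions: bounded by `‖f‖`, with modulus of continuity controlled
by that of `f`, and with `m`-mean `c`. -/
def AAset (m : Measure G) (c : ℝ) (f : G →ᵇ ℝ) : Set (G →ᵇ ℝ) :=
  {h | ‖h‖ ≤ ‖f‖ ∧ (∀ x y : G, dist (h x) (h y) ≤ dist (Trans f x) (Trans f y)) ∧
    ∫ x, h x ∂m = c}

lemma AAset_closed (m : Measure G) [IsProbabilityMeasure m] (c : ℝ) (f : G →ᵇ ℝ) :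
    IsClosed (AAset m c f) := by
  have e : AAset m c f = {h : G →ᵇ ℝ | ‖h‖ ≤ ‖f‖}
      ∩ ((⋂ x : G, ⋂ y : G, {h : G →ᵇ ℝ | dist (h x) (h y) ≤ dist (Trans f x) (Trans f y)})
      ∩ {h : G →ᵇ ℝ | ∫ x, h x ∂m = c}) := by
    ext h
    simp [AAset, Set.mem_iInter, and_assoc]
  rw [e]
  refine (isClosed_le continuous_norm continuous_const).inter (IsClosed.inter ?_ ?_)
  · exact isClosed_iInter fun x => isClosed_iInter fun y =>
      isClosed_le ((continuous_eval_const x).dist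
        (continuous_eval_const y)) continuous_const
  · exact isClosed_eq (lipschitz_integral m).continuous continuous_const

lemma AAset_equicontinuous (m : Measure G) (c : ℝ) (f : G →ᵇ ℝ) :
    Equicontinuous ((↑) : AAset m c f → G → ℝ) := by
  intro x₀
  rw [Metric.equicontinuousAt_iff_right]
  intro ε hε
  have hV : {y : G | dist (Trans f y) (Trans f x₀) < ε} ∈ 𝓝 x₀ := by
    have hopen : IsOpen {y : G | dist (Trans f y) (Trans f x₀) < ε} :=
      isOpen_lt ((continuous_Trans f).dist continuous_const) continuous_const
    exact hopen.mem_nhds (by simp [hε])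
  filter_upwards [hV] with y hy h
  calc dist ((h : G →ᵇ ℝ) x₀) ((h : G →ᵇ ℝ) y) ≤ dist (Trans f x₀) (Trans f y) :=
      h.2.2.1 x₀ y
    _ < ε := by rw [dist_comm]; exact hy

lemma AAset_compact (m : Measure G) [IsProbabilityMeasure m] (c : ℝ) (f : G →ᵇ ℝ) :
    IsCompact (AAset m c f) := by
  refine BoundedContinuousFunction.arzela_ascoli₂ (Metric.closedBall (0 : ℝ) ‖f‖)
    (isCompact_closedBall 0 ‖f‖) (AAset m c f) (AAset_closed m c f) ?_
    (AAset_equicontinuous m c f)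
  intro h x hh
  rw [Metric.mem_closedBall, dist_zero_right]
  exact le_trans (h.norm_coe_le_norm x) hh.1

lemma f_mem_AAset (m : Measure G) [IsProbabilityMeasure m] (f : G →ᵇ ℝ) :
    f ∈ AAset m (∫ x, f x ∂m) f := by
  refine ⟨le_refl _, fun x y => ?_, rfl⟩
  have := BoundedContinuousFunction.dist_coe_le_dist (f := Trans f x) (g := Trans f y) 1
  simpa using this

lemma Trans_dist_mul (f : G →ᵇ ℝ) (u x y : G) :
    dist (Trans f (u * x)) (Trans f (u * y)) ≤ dist (Trans f x) (Trans f y) := by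
  refine (BoundedContinuousFunction.dist_le dist_nonneg).2 fun w => ?_
  have := BoundedContinuousFunction.dist_coe_le_dist (f := Trans f x) (g := Trans f y) (w * u)
  simpa [mul_assoc] using this

lemma Aop_mem_AAset (m : Measure G) [Measure.IsMulLeftInvariant m] [IsProbabilityMeasure m]
    (c : ℝ) (f : G →ᵇ ℝ) (β : Measure G) [IsProbabilityMeasure β] {h : G →ᵇ ℝ}
    (hh : h ∈ AAset m c f) : Aop β h ∈ AAset m c f := by
  obtain ⟨hnorm, hmod, hmean⟩ := hh
  refine ⟨?_, ?_, ?_⟩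
  · refine le_trans ?_ hnorm
    exact BoundedContinuousFunction.norm_ofNormedAddCommGroup_le _ (norm_nonneg h) _
  · intro x y
    simp only [Aop_apply]
    have hsub : ∫ u, (h (u * x) - h (u * y)) ∂β
        = (∫ u, h (u * x) ∂β) - ∫ u, h (u * y) ∂β :=
      integral_sub ((Trans h x).integrable β) ((Trans h y).integrable β)
    rw [Real.dist_eq, ← hsub]
    have hb : ∀ u : G, ‖h (u * x) - h (u * y)‖ ≤ dist (Trans f x) (Trans f y) := by
      intro u
      rw [Real.norm_eq_abs, ← Real.dist_eq]
      exact le_trans (hmod (u * x) (u * y)) (Trans_dist_mul f u x y)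
    have := norm_integral_le_of_norm_le_const (μ := β)
      (f := fun u => h (u * x) - h (u * y)) (C := dist (Trans f x) (Trans f y))
      (Filter.Eventually.of_forall hb)
    simpa [Real.norm_eq_abs, measure_univ] using this
  · rw [integral_Aop m β h, hmean]


/-- The uniform spectral-gap lemma. -/
lemma gap (m : Measure G) [Measure.IsMulLeftInvariant m] [m.IsOpenPosMeasure]
    [IsProbabilityMeasure m] (K : Set (ProbabilityMeasure G)) (hK : IsCompact K)
    (hKca : ∀ μ ∈ K, CosetAperiodic (μ : Measure G)) (f : G →ᵇ ℝ) (c : ℝ)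
    {ε : ℝ} (hε : 0 < ε) :
    ∃ γ : ℝ, 0 ≤ γ ∧ γ < 1 ∧ ∀ β ∈ K, ∀ h ∈ AAset m c f, ε ≤ Qc m c h →
      Qc m c (Aop (β : Measure G) h) ≤ γ * Qc m c h := by
  classical
  set S : Set (G →ᵇ ℝ) := AAset m c f ∩ {h | ε ≤ Qc m c h} with hSdef
  have hS : IsCompact S :=
    (AAset_compact m c f).inter_right (isClosed_le continuous_const (cont_Qc m c))
  set T : Set (ProbabilityMeasure G × (G →ᵇ ℝ)) := K ×ˢ S with hTdef
  have hT : IsCompact T := hK.prod hS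
  by_cases hTne : T.Nonempty
  · set ψ : ProbabilityMeasure G × (G →ᵇ ℝ) → ℝ :=
      fun p => Qc m c (Aop (p.1 : Measure G) p.2) / Qc m c p.2 with hψdef
    have hψcont : ContinuousOn ψ T := by
      apply ContinuousOn.div
      · exact ((cont_Qc m c).comp cont_Aop_joint).continuousOn
      · exact ((cont_Qc m c).comp continuous_snd).continuousOn
      · intro p hp
        have : ε ≤ Qc m c p.2 := hp.2.2
        exact ne_of_gt (lt_of_lt_of_le hε this)
    obtain ⟨p₀, hp₀T, hmax⟩ := hT.exists_isMaxOn hTne hψcont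
    have hQp₀pos : 0 < Qc m c p₀.2 := lt_of_lt_of_le hε hp₀T.2.2
    have hγ₀lt : ψ p₀ < 1 := by
      rw [hψdef, div_lt_one hQp₀pos]
      rcases lt_or_eq_of_le (Qc_Aop_le m (p₀.1 : Measure G) c p₀.2) with hlt | heq
      · exact hlt
      · exfalso
        have := Qc_strict m (p₀.1 : Measure G) (hKca p₀.1 hp₀T.1) p₀.2 c
          hp₀T.2.1.2.2 heq
        rw [this] at hQp₀pos
        exact lt_irrefl 0 hQp₀pos
    refine ⟨max (ψ p₀) 0, le_max_right _ _, max_lt hγ₀lt one_pos, ?_⟩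
    intro β hβ h hh hεh
    have hmem : (β, h) ∈ T := ⟨hβ, hh, hεh⟩
    have hle : ψ (β, h) ≤ ψ p₀ := hmax hmem
    have hQh : 0 < Qc m c h := lt_of_lt_of_le hε hεh
    have h1 : Qc m c (Aop (β : Measure G) h) ≤ ψ p₀ * Qc m c h := by
      rw [hψdef] at hle
      simp only at hle
      calc Qc m c (Aop (β : Measure G) h)
          = Qc m c (Aop (β : Measure G) h) / Qc m c h * Qc m c h := by
            field_simp
        _ ≤ ψ p₀ * Qc m c h := mul_le_mul_of_nonneg_right hle (le_of_lt hQh)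
    exact le_trans h1 (mul_le_mul_of_nonneg_right (le_max_left _ _) (le_of_lt hQh))
  · refine ⟨0, le_refl _, one_pos, ?_⟩
    intro β hβ h hh hεh
    exact absurd ⟨(β, h), hβ, hh, hεh⟩ hTne

/-- From small quadratic deviation to small uniform deviation, on the class `AAset`. -/
lemma sup_small (m : Measure G) [Measure.IsMulLeftInvariant m] [m.IsOpenPosMeasure]
    [IsProbabilityMeasure m] (f : G →ᵇ ℝ) (c : ℝ) {ε : ℝ} (hε : 0 < ε) :
    ∃ δ : ℝ, 0 < δ ∧ ∀ h ∈ AAset m c f, Qc m c h ≤ δ → ∀ x, |h x - c| ≤ ε := by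
  have hε2 : 0 < ε / 2 := by linarith
  set χ : G × G → ℝ := fun p => dist (Trans f (p.2 * p.1)) (Trans f p.2) with hχdef
  have hχcont : Continuous χ :=
    (Continuous.dist ((continuous_Trans f).comp (continuous_snd.mul continuous_fst))
      ((continuous_Trans f).comp continuous_snd))
  have hOopen : IsOpen (χ ⁻¹' Set.Iio (ε / 2)) := (isOpen_Iio).preimage hχcont
  have hsub : ({1} : Set G) ×ˢ (Set.univ : Set G) ⊆ χ ⁻¹' Set.Iio (ε / 2) := by
    rintro ⟨v, x⟩ ⟨hv, -⟩
    simp only [Set.mem_singleton_iff] at hv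
    subst hv
    simp only [Set.mem_preimage, hχdef, mul_one, dist_self, Set.mem_Iio]
    exact hε2
  obtain ⟨V, W, hVopen, hWopen, hV1, hWuniv, hVW⟩ :=
    generalized_tube_lemma isCompact_singleton isCompact_univ hOopen hsub
  have h1V : (1 : G) ∈ V := hV1 rfl
  have hmV : 0 < m V := hVopen.measure_pos m ⟨1, h1V⟩
  have hmVtop : (m V).toReal > 0 := ENNReal.toReal_pos hmV.ne' (measure_ne_top m V)
  refine ⟨ε / 2 * (ε / 2) * (m V).toReal / 2, by positivity, ?_⟩
  intro h hh hQ x₀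
  by_contra hcon
  push_neg at hcon
  -- every point of x₀ • V is ε/2-deviant
  have hlower : ∀ y ∈ x₀ • V, ε / 2 ≤ |h y - c| := by
    rintro y ⟨v, hv, rfl⟩
    have hχsmall : dist (Trans f (x₀ * v)) (Trans f x₀) < ε / 2 := by
      have : (v, x₀) ∈ χ ⁻¹' Set.Iio (ε / 2) := hVW ⟨hv, hWuniv (Set.mem_univ x₀)⟩
      simpa [hχdef] using this
    have hmod : dist (h (x₀ * v)) (h x₀) < ε / 2 :=
      lt_of_le_of_lt (hh.2.1 (x₀ * v) x₀) hχsmall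
    have htriv : |h x₀ - c| ≤ |h x₀ - h (x₀ * v)| + |h (x₀ * v) - c| := by
      have := abs_sub_abs_le_abs_sub (h x₀ - c) (h x₀ - h (x₀ * v))
      calc |h x₀ - c| ≤ |h x₀ - h (x₀ * v)| + |(h x₀ - c) - (h x₀ - h (x₀ * v))| := by
            have := abs_add_le (h x₀ - h (x₀ * v)) ((h x₀ - c) - (h x₀ - h (x₀ * v)))
            simpa using this
        _ = |h x₀ - h (x₀ * v)| + |h (x₀ * v) - c| := by ring_nf
    have hd : |h x₀ - h (x₀ * v)| < ε / 2 := by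
      rw [← Real.dist_eq, dist_comm]
      exact hmod
    have : ε < |h x₀ - c| := hcon
    show ε / 2 ≤ |h (x₀ * v) - c|
    linarith [htriv, hd, hcon]
  have hmeasV : m (x₀ • V) = m V := by
    have he : x₀ • V = (fun y => x₀⁻¹ * y) ⁻¹' V := by
      ext y
      rw [Set.mem_smul_set_iff_inv_smul_mem]
      rfl
    rw [he, measure_preimage_mul m x₀⁻¹ V]
  have hQlow : ε / 2 * (ε / 2) * (m V).toReal ≤ Qc m c h := by
    have hopen : IsOpen (x₀ • V) := hVopen.smul x₀
    have hconst : ∀ y ∈ x₀ • V, ε / 2 * (ε / 2) ≤ (h y - c) * (h y - c) := by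
      intro y hy
      have := hlower y hy
      nlinarith [this, abs_nonneg (h y - c), sq_abs (h y - c)]
    have h1 : ε / 2 * (ε / 2) * (m (x₀ • V)).toReal ≤ ∫ y in x₀ • V, (h y - c) * (h y - c) ∂m := by
      have := setIntegral_ge_of_const_le hopen.measurableSet (measure_ne_top m _) hconst
        (((h - BoundedContinuousFunction.const G c) *
          (h - BoundedContinuousFunction.const G c)).integrable m).integrableOn
      rw [smul_eq_mul, measureReal_def] at this; linarith
    have h2 : ∫ y in x₀ • V, (h y - c) * (h y - c) ∂m ≤ ∫ y, (h y - c) * (h y - c) ∂m :=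
      setIntegral_le_integral (((h - BoundedContinuousFunction.const G c) *
        (h - BoundedContinuousFunction.const G c)).integrable m)
        (Filter.Eventually.of_forall fun y => mul_self_nonneg _)
    rw [hmeasV] at h1
    exact le_trans h1 h2
  have : ε / 2 * (ε / 2) * (m V).toReal / 2 < ε / 2 * (ε / 2) * (m V).toReal := by
    have hp : 0 < ε / 2 * (ε / 2) * (m V).toReal := by positivity
    linarith
  linarith [hQ, hQlow]


/-- `CompF s n h = Aop s₀ (Aop s₁ (⋯ (Aop sₙ₋₁ h)))`, via the inner recursion. -/
noncomputable def CompF (s : ℕ → ProbabilityMeasure G) : ℕ → (G →ᵇ ℝ) → (G →ᵇ ℝ)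
  | 0, h => h
  | n + 1, h => CompF s n (Aop (s n : Measure G) h)

lemma CompF_succ_outer (s : ℕ → ProbabilityMeasure G) (n : ℕ) (h : G →ᵇ ℝ) :
    CompF s (n + 1) h = Aop (s 0 : Measure G) (CompF (fun i => s (i + 1)) n h) := by
  induction n generalizing s h with
  | zero => rfl
  | succ n ih =>
    show CompF s (n + 1) (Aop (s (n + 1) : Measure G) h) = _
    rw [ih s (Aop (s (n + 1) : Measure G) h)]
    rfl

lemma convSeq_prob (μ : ℕ → ProbabilityMeasure G) (ν : Measure G) [IsProbabilityMeasure ν]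
    (n : ℕ) : IsProbabilityMeasure (convSeqG (fun k => (μ k : Measure G)) ν n) := by
  induction n with
  | zero => assumption
  | succ n ih =>
    show IsProbabilityMeasure ((μ n : Measure G).mconv _)
    exact Measure.probabilitymeasure_of_probabilitymeasures_mconv _ _

lemma integral_convSeq (μ : ℕ → ProbabilityMeasure G) (ν : Measure G) [IsProbabilityMeasure ν]
    (n : ℕ) (h : G →ᵇ ℝ) :
    ∫ x, h x ∂(convSeqG (fun k => (μ k : Measure G)) ν n) = ∫ x, (CompF μ n h) x ∂ν := by
  induction n generalizing h with
  | zero => rfl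
  | succ n ih =>
    haveI := convSeq_prob μ ν n
    show ∫ x, h x ∂((μ n : Measure G).mconv (convSeqG (fun k => (μ k : Measure G)) ν n)) = _
    rw [integral_mconv (μ n : Measure G) (convSeqG (fun k => (μ k : Measure G)) ν n) h,
      ih (Aop (μ n : Measure G) h)]
    rfl

lemma chain (m : Measure G) [Measure.IsMulLeftInvariant m] [IsProbabilityMeasure m]
    (K : Set (ProbabilityMeasure G)) (f : G →ᵇ ℝ) (c : ℝ) (hfA : f ∈ AAset m c f)
    {δ γ : ℝ} (hδ : 0 < δ) (hγ0 : 0 ≤ γ) (hγ1 : γ < 1)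
    (hgap : ∀ β ∈ K, ∀ h ∈ AAset m c f, δ ≤ Qc m c h →
      Qc m c (Aop (β : Measure G) h) ≤ γ * Qc m c h) :
    ∀ n : ℕ, ∀ s : ℕ → ProbabilityMeasure G, (∀ i, s i ∈ K) →
      CompF s n f ∈ AAset m c f ∧ Qc m c (CompF s n f) ≤ max δ (γ ^ n * Qc m c f) := by
  intro n
  induction n with
  | zero =>
    intro s hs
    refine ⟨hfA, ?_⟩
    simp only [pow_zero, one_mul]
    exact le_max_right _ _
  | succ n ih =>
    intro s hs
    rw [CompF_succ_outer]
    obtain ⟨hmem, hbound⟩ := ih (fun i => s (i + 1)) (fun i => hs (i + 1))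
    set h : G →ᵇ ℝ := CompF (fun i => s (i + 1)) n f with hdef
    refine ⟨Aop_mem_AAset m c f (s 0 : Measure G) hmem, ?_⟩
    by_cases hcase : δ ≤ Qc m c h
    · have h1 := hgap (s 0) (hs 0) h hmem hcase
      have h2 : γ * Qc m c h ≤ γ * max δ (γ ^ n * Qc m c f) :=
        mul_le_mul_of_nonneg_left hbound hγ0
      have h3 : γ * max δ (γ ^ n * Qc m c f) ≤ max δ (γ ^ (n + 1) * Qc m c f) := by
        rw [mul_max_of_nonneg _ _ hγ0]
        refine max_le_max ?_ (le_of_eq (by ring))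
        exact mul_le_of_le_one_left (le_of_lt hδ) (le_of_lt hγ1)
      linarith
    · push_neg at hcase
      have h1 : Qc m c (Aop (s 0 : Measure G) h) ≤ Qc m c h := Qc_Aop_le m _ c h
      have : Qc m c h ≤ δ := le_of_lt hcase
      exact le_trans h1 (le_trans this (le_max_left _ _))


end IKaux

open IKaux

/-- **Theorem (nonstationary Itô–Kawada).** Let `G` be a compact second countable
topological group with Haar probability measure `𝔪`, and `K` a weak-* compact set of Borel
probability measures on `G`, each coset aperiodic. Then for any sequence `μ₁, μ₂, …` in `K`
and any starting probability measure `ν`, the convolutions `μₙ * ⋯ * μ₁ * ν` converge to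
`𝔪` in the weak-* topology. -/
theorem nonstationary_ito_kawada
    (m : Measure G) [m.IsHaarMeasure] [IsProbabilityMeasure m]
    (K : Set (ProbabilityMeasure G)) (hK : IsCompact K)
    (hKca : ∀ μ ∈ K, CosetAperiodic (μ : Measure G))
    (μs : ℕ → ProbabilityMeasure G) (hμs : ∀ n, μs n ∈ K)
    (ν : Measure G) [IsProbabilityMeasure ν] :
    ∀ f : BoundedContinuousFunction G ℝ,
      Tendsto (fun n => ∫ g, f g ∂(convSeqG (fun k => (μs k : Measure G)) ν n))
        atTop (𝓝 (∫ g, f g ∂m)) := by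
  intro f
  set c : ℝ := ∫ g, f g ∂m with hc
  rw [Metric.tendsto_atTop]
  intro ε hε
  have hε2 : 0 < ε / 2 := by linarith
  obtain ⟨δ, hδ, hsup⟩ := sup_small m f c hε2
  obtain ⟨γ, hγ0, hγ1, hgap⟩ := gap m K hK hKca f c hδ
  have hfA : f ∈ AAset m c f := f_mem_AAset m f
  have hpow : Tendsto (fun n : ℕ => γ ^ n * Qc m c f) atTop (𝓝 0) := by
    have := (tendsto_pow_atTop_nhds_zero_of_lt_one hγ0 hγ1).mul_const (Qc m c f)
    simpa using this
  have hev : ∀ᶠ n : ℕ in atTop, γ ^ n * Qc m c f < δ :=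
    hpow.eventually_lt_const hδ
  rw [eventually_atTop] at hev
  obtain ⟨N, hN⟩ := hev
  refine ⟨N, fun n hn => ?_⟩
  haveI := convSeq_prob μs ν n
  obtain ⟨hmemA, hQb⟩ := chain m K f c hfA hδ hγ0 hγ1 hgap n μs hμs
  have hQ : Qc m c (CompF μs n f) ≤ δ := le_trans hQb (max_le le_rfl (le_of_lt (hN n hn)))
  have hsupb : ∀ x, |(CompF μs n f) x - c| ≤ ε / 2 := hsup _ hmemA hQ
  have hsubint : ∫ x, ((CompF μs n f) x - c) ∂ν = (∫ x, (CompF μs n f) x ∂ν) - c := by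
    rw [integral_sub ((CompF μs n f).integrable ν) (integrable_const c), integral_const,
      probReal_univ, one_smul]
  have hb : |(∫ x, (CompF μs n f) x ∂ν) - c| ≤ ε / 2 := by
    rw [← hsubint]
    have := norm_integral_le_of_norm_le_const (μ := ν)
      (f := fun x => (CompF μs n f) x - c) (C := ε / 2)
      (Filter.Eventually.of_forall fun x => by
        rw [Real.norm_eq_abs]; exact hsupb x)
    simpa [Real.norm_eq_abs, measure_univ] using this
  rw [integral_convSeq μs ν n f, Real.dist_eq]
  linarith [hb]
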